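/- Let M be a contraction mapping 𝒰 ⊕ 𝒵∘ ⊕ 𝒱 into 𝒴 ⊕ 𝒵∘ ⊕ 𝒱 with block entries δ, γ₁, γ₂, β₁, β₂, α₁₁, α₁₂, α₂₁, α₂₂ as in the 3×3 partitioning. Write γ = [γ₁ γ₂] : 𝒵∘ ⊕ 𝒱 → 𝒴 and α = [[α₁₁, α₁₂],[α₂₁, α₂₂]] on 𝒵∘ ⊕ 𝒱. Then the following are equivalent: (a) the pair {γ, α} is observable, i.e. ⋂_{n≥0} ker(γ αⁿ) = {0}; (b) both (i) for every v ∈ 𝒱, if γ₂ α₂₂ⁿ v = 0 and α₁₂ α₂₂ⁿ v = 0 for all n ≥ 0 then v = 0, and (ii) for every z ∈ 𝒵∘ and v ∈ 𝒱, if γ αⁿ (z ⊕ v) = 0 for all n ≥ 0 then z = 0. -/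

import Mathlib

/- Statement 6 (Lemma on observability of partitioned systems): Let M be a contraction
mapping 𝒰 ⊕ 𝒵∘ ⊕ 𝒱 into 𝒴 ⊕ 𝒵∘ ⊕ 𝒱 with block entries δ, γ₁, γ₂, β₁, β₂, α₁₁, α₁₂,
α₂₁, α₂₂, and write γ = [γ₁ γ₂] and α = [[α₁₁,α₁₂],[α₂₁,α₂₂]] on 𝒵∘ ⊕ 𝒱.  Then {γ, α}
is observable if and only if (i) for every v ∈ 𝒱, if γ₂α₂₂ⁿv = 0 and α₁₂α₂₂ⁿv = 0 for
all n then v = 0, and (ii) for every z ∈ 𝒵∘, v ∈ 𝒱, if γαⁿ(z ⊕ v) = 0 for all n then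
z = 0. -/

open ContinuousLinearMap

noncomputable section

/-- row operator `[g₁ g₂] : A ⊕ B → C`. -/
noncomputable def rowC {A B C : Type*}
    [NormedAddCommGroup A] [InnerProductSpace ℂ A]
    [NormedAddCommGroup B] [InnerProductSpace ℂ B]
    [NormedAddCommGroup C] [InnerProductSpace ℂ C]
    (g₁ : A →L[ℂ] C) (g₂ : B →L[ℂ] C) : WithLp 2 (A × B) →L[ℂ] C :=
  (g₁.coprod g₂).comp (WithLp.prodContinuousLinearEquiv 2 ℂ A B).toContinuousLinearMap

/-- column operator `[b₁ ; b₂] : A → C ⊕ D`. -/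
noncomputable def colC {A C D : Type*}
    [NormedAddCommGroup A] [InnerProductSpace ℂ A]
    [NormedAddCommGroup C] [InnerProductSpace ℂ C]
    [NormedAddCommGroup D] [InnerProductSpace ℂ D]
    (b₁ : A →L[ℂ] C) (b₂ : A →L[ℂ] D) : A →L[ℂ] WithLp 2 (C × D) :=
  ((WithLp.prodContinuousLinearEquiv 2 ℂ C D).symm).toContinuousLinearMap.comp (b₁.prod b₂)

/-- 2×2 block operator `[[d, g],[b, a]] : A ⊕ B → C ⊕ D`. -/
noncomputable def block2 {A B C D : Type*}
    [NormedAddCommGroup A] [InnerProductSpace ℂ A]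
    [NormedAddCommGroup B] [InnerProductSpace ℂ B]
    [NormedAddCommGroup C] [InnerProductSpace ℂ C]
    [NormedAddCommGroup D] [InnerProductSpace ℂ D]
    (d : A →L[ℂ] C) (g : B →L[ℂ] C) (b : A →L[ℂ] D) (a : B →L[ℂ] D) :
    WithLp 2 (A × B) →L[ℂ] WithLp 2 (C × D) :=
  ((WithLp.prodContinuousLinearEquiv 2 ℂ C D).symm).toContinuousLinearMap.comp
    ((rowC d g).prod (rowC b a))

/-! A vector is unobservable when `γ` kills its whole `α`-orbit, and the unobservable vectors form
an `α`-invariant set. Under (ii) every vector of such an orbit lies in `0 ⊕ 𝒱`; there `α` can only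
act through `α₂₂`, its `α₁₂`-part being the first component of the next vector of the orbit, and
`γ` acts through `γ₂`, so (i) forces the orbit to vanish. Conversely, on `0 ⊕ v` with
`α₁₂ α₂₂ⁿ v = 0` for all `n` the same computation shows that `γ αⁿ (0 ⊕ v) = γ₂ α₂₂ⁿ v`. -/

section BlockOperators

variable {A B C D : Type*}
  [NormedAddCommGroup A] [InnerProductSpace ℂ A]
  [NormedAddCommGroup B] [InnerProductSpace ℂ B]
  [NormedAddCommGroup C] [InnerProductSpace ℂ C]
  [NormedAddCommGroup D] [InnerProductSpace ℂ D]

@[simp] lemma rowC_toLp (g₁ : A →L[ℂ] C) (g₂ : B →L[ℂ] C) (a : A) (b : B) :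
    rowC g₁ g₂ (WithLp.toLp 2 (a, b)) = g₁ a + g₂ b := rfl

@[simp] lemma block2_toLp (d : A →L[ℂ] C) (g : B →L[ℂ] C) (b : A →L[ℂ] D) (a : B →L[ℂ] D)
    (x : A) (y : B) :
    block2 d g b a (WithLp.toLp 2 (x, y)) = WithLp.toLp 2 (d x + g y, b x + a y) := rfl

end BlockOperators

lemma ContinuousLinearMap.apply_pow_apply_eq_zero_of_forall {R X Y : Type*} [Semiring R]
    [TopologicalSpace X] [AddCommMonoid X] [Module R X]
    [TopologicalSpace Y] [AddCommMonoid Y] [Module R Y]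
    {Γ : X →L[R] Y} {T : X →L[R] X} {x : X} (h : ∀ n, Γ ((T ^ n) x) = 0) (k n : ℕ) :
    Γ ((T ^ n) ((T ^ k) x)) = 0 := by
  rw [← mul_apply_eq_comp, ← pow_add]
  exact h (n + k)

section Observability

variable {𝒵 𝒱 : Type*}
  [NormedAddCommGroup 𝒵] [InnerProductSpace ℂ 𝒵]
  [NormedAddCommGroup 𝒱] [InnerProductSpace ℂ 𝒱]
  {α₁₁ : 𝒵 →L[ℂ] 𝒵} {α₁₂ : 𝒱 →L[ℂ] 𝒵} {α₂₁ : 𝒵 →L[ℂ] 𝒱} {α₂₂ : 𝒱 →L[ℂ] 𝒱}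

lemma block2_pow_toLp_zero_of_apply_pow_eq_zero {v : 𝒱} (hv : ∀ n, α₁₂ ((α₂₂ ^ n) v) = 0) (n : ℕ) :
    (block2 α₁₁ α₁₂ α₂₁ α₂₂ ^ n) (WithLp.toLp 2 (0, v)) = WithLp.toLp 2 (0, (α₂₂ ^ n) v) := by
  induction n with
  | zero => rfl
  | succ n ih =>
    simp only [pow_succ', mul_apply_eq_comp, ih, block2_toLp, map_zero, hv n, zero_add]

lemma block2_pow_eq_toLp_zero_of_fst_eq_zero {x : WithLp 2 (𝒵 × 𝒱)}
    (hx : ∀ k, ((block2 α₁₁ α₁₂ α₂₁ α₂₂ ^ k) x).fst = 0) (n : ℕ) :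
    (block2 α₁₁ α₁₂ α₂₁ α₂₂ ^ n) x = WithLp.toLp 2 (0, (α₂₂ ^ n) x.snd) := by
  induction n with
  | zero => simpa [WithLp.ext_iff, Prod.ext_iff] using hx 0
  | succ n ih =>
    have hfst := hx (n + 1)
    rw [pow_succ', mul_apply_eq_comp, ih] at hfst ⊢
    simp only [block2_toLp, WithLp.toLp_fst, map_zero, zero_add] at hfst ⊢
    rw [hfst, pow_succ', mul_apply_eq_comp]

lemma apply_pow_snd_eq_zero_of_block2_pow_fst_eq_zero {x : WithLp 2 (𝒵 × 𝒱)}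
    (hx : ∀ k, ((block2 α₁₁ α₁₂ α₂₁ α₂₂ ^ k) x).fst = 0) (n : ℕ) :
    α₁₂ ((α₂₂ ^ n) x.snd) = 0 := by
  simpa [pow_succ', mul_apply_eq_comp, block2_pow_eq_toLp_zero_of_fst_eq_zero hx n] using hx (n + 1)

end Observability

variable {𝒰 𝒴 𝒵 𝒱 : Type*}
  [NormedAddCommGroup 𝒰] [InnerProductSpace ℂ 𝒰] [CompleteSpace 𝒰]
  [NormedAddCommGroup 𝒴] [InnerProductSpace ℂ 𝒴] [CompleteSpace 𝒴]
  [NormedAddCommGroup 𝒵] [InnerProductSpace ℂ 𝒵] [CompleteSpace 𝒵]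
  [NormedAddCommGroup 𝒱] [InnerProductSpace ℂ 𝒱] [CompleteSpace 𝒱]

theorem observability_of_partitioned_system_general
    (γ₁ : 𝒵 →L[ℂ] 𝒴) (γ₂ : 𝒱 →L[ℂ] 𝒴)
    (α₁₁ : 𝒵 →L[ℂ] 𝒵) (α₁₂ : 𝒱 →L[ℂ] 𝒵) (α₂₁ : 𝒵 →L[ℂ] 𝒱) (α₂₂ : 𝒱 →L[ℂ] 𝒱) :
    -- {γ, α} observable
    (∀ x : WithLp 2 (𝒵 × 𝒱),
        (∀ n : ℕ, (rowC γ₁ γ₂) (((block2 α₁₁ α₁₂ α₂₁ α₂₂) ^ n) x) = 0) → x = 0) ↔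
      ((∀ v : 𝒱, (∀ n : ℕ, γ₂ ((α₂₂ ^ n) v) = 0 ∧ α₁₂ ((α₂₂ ^ n) v) = 0) → v = 0) ∧
        (∀ (zv : 𝒵 × 𝒱),
          (∀ n : ℕ, (rowC γ₁ γ₂) (((block2 α₁₁ α₁₂ α₂₁ α₂₂) ^ n)
              ((WithLp.equiv 2 (𝒵 × 𝒱)).symm zv)) = 0) → zv.1 = 0)) := by
  constructor
  · intro hobs
    refine ⟨fun v hv => ?_, fun zv hzv => congrArg WithLp.fst (hobs _ hzv)⟩
    have hzero : WithLp.toLp 2 ((0 : 𝒵), v) = 0 := hobs _ fun n => by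
      rw [block2_pow_toLp_zero_of_apply_pow_eq_zero (fun k => (hv k).2), rowC_toLp, map_zero,
        (hv n).1, add_zero]
    exact congrArg WithLp.snd hzero
  · rintro ⟨hcorner, hfst⟩ x hx
    have hfst_orbit : ∀ k, ((block2 α₁₁ α₁₂ α₂₁ α₂₂ ^ k) x).fst = 0 := fun k =>
      hfst _ fun n => by simpa using apply_pow_apply_eq_zero_of_forall hx k n
    have hsnd : x.snd = 0 := hcorner _ fun n =>
      ⟨by simpa [block2_pow_eq_toLp_zero_of_fst_eq_zero hfst_orbit] using hx n,
        apply_pow_snd_eq_zero_of_block2_pow_fst_eq_zero hfst_orbit n⟩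
    simpa [hsnd, ← Prod.zero_eq_mk] using block2_pow_eq_toLp_zero_of_fst_eq_zero hfst_orbit 0

theorem observability_of_partitioned_system
    (δ : 𝒰 →L[ℂ] 𝒴) (γ₁ : 𝒵 →L[ℂ] 𝒴) (γ₂ : 𝒱 →L[ℂ] 𝒴)
    (β₁ : 𝒰 →L[ℂ] 𝒵) (β₂ : 𝒰 →L[ℂ] 𝒱)
    (α₁₁ : 𝒵 →L[ℂ] 𝒵) (α₁₂ : 𝒱 →L[ℂ] 𝒵) (α₂₁ : 𝒵 →L[ℂ] 𝒱) (α₂₂ : 𝒱 →L[ℂ] 𝒱)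
    -- M : 𝒰 ⊕ (𝒵 ⊕ 𝒱) → 𝒴 ⊕ (𝒵 ⊕ 𝒱) is a contraction:
    (hM : ‖block2 δ (rowC γ₁ γ₂) (colC β₁ β₂) (block2 α₁₁ α₁₂ α₂₁ α₂₂)‖ ≤ 1) :
    -- {γ, α} observable
    (∀ x : WithLp 2 (𝒵 × 𝒱),
        (∀ n : ℕ, (rowC γ₁ γ₂) (((block2 α₁₁ α₁₂ α₂₁ α₂₂) ^ n) x) = 0) → x = 0) ↔
      ((∀ v : 𝒱, (∀ n : ℕ, γ₂ ((α₂₂ ^ n) v) = 0 ∧ α₁₂ ((α₂₂ ^ n) v) = 0) → v = 0) ∧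
        (∀ (zv : 𝒵 × 𝒱),
          (∀ n : ℕ, (rowC γ₁ γ₂) (((block2 α₁₁ α₁₂ α₂₁ α₂₂) ^ n)
              ((WithLp.equiv 2 (𝒵 × 𝒱)).symm zv)) = 0) → zv.1 = 0)) :=
  observability_of_partitioned_system_general γ₁ γ₂ α₁₁ α₁₂ α₂₁ α₂₂

end
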